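/- Soundness of modular DRUP proofs: if π is a valid modular DRUP proof, then the conjunction of all clauses asserted into module s together with all clauses asserted into module m is unsatisfiable. -/

import Mathlib

/-- Propositional variables. -/
abbrev Var := ℕ
/-- A literal is a variable together with a polarity. -/
abbrev Lit := Var × Bool
/-- A clause is a finite set of literals. -/
abbrev Clause := Finset Lit
/-- A total truth assignment. -/
abbrev Assignment := Var → Bool

/-- Negation of a literal. -/
def Lit.neg (l : Lit) : Lit := (l.1, !l.2)

/-- An assignment satisfies a literal. -/
def satLit (σ : Assignment) (l : Lit) : Prop := σ l.1 = l.2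
/-- An assignment satisfies a clause (some literal is true). -/
def satClause (σ : Assignment) (C : Clause) : Prop := ∃ l ∈ C, satLit σ l
/-- An assignment satisfies a set of clauses. -/
def satSet (σ : Assignment) (Γ : Set Clause) : Prop := ∀ C ∈ Γ, satClause σ C
/-- Semantic consequence: every model of Γ satisfies C. -/
def entails (Γ : Set Clause) (C : Clause) : Prop :=
  ∀ σ : Assignment, satSet σ Γ → satClause σ C

/-- Unit-propagation closure: the least set of literals containing the
assumptions `A` and closed under the unit-propagation rule for clauses of `Γ`:
if all literals of a clause but one are falsified (their negations derived),
the remaining literal is derived. -/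
inductive UPC (Γ : Set Clause) (A : Set Lit) : Lit → Prop
  | assm {l : Lit} : l ∈ A → UPC Γ A l
  | prop {C : Clause} {l : Lit} : C ∈ Γ → l ∈ C →
      (∀ l' ∈ C, l' ≠ l → UPC Γ A (Lit.neg l')) → UPC Γ A l

/-- Unit propagation from `Γ` under assumptions `A` reaches a conflict:
some clause of `Γ` has all its literals falsified by the closure. -/
def upConflict (Γ : Set Clause) (A : Set Lit) : Prop :=
  ∃ C ∈ Γ, ∀ l ∈ C, UPC Γ A (Lit.neg l)

/-- `RUP Γ C` (written `Γ ⊢_UP C`): unit propagation from `Γ` together with the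
negations of the literals of `C` reaches a conflict. -/
def RUP (Γ : Set Clause) (C : Clause) : Prop :=
  upConflict Γ {l | ∃ m ∈ C, l = Lit.neg m}

/-- The two modules: secondary `s` and main `m`. -/
inductive ModIdx | s | m
deriving DecidableEq

/-- A step of a modular DRUP proof. -/
inductive MStep
  | asserted (idx : ModIdx) (c : Clause)
  | rup (idx : ModIdx) (c : Clause)
  | cp (src dst : ModIdx) (c : Clause)
  | del (idx : ModIdx) (c : Clause)
deriving DecidableEq

/-- A step adds clause `c` to module `idx` (by assertion, rup, or copy into `idx`). -/
def MStep.addsTo : MStep → ModIdx → Clause → Prop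
  | .asserted i c, j, d => i = j ∧ c = d
  | .rup i c, j, d => i = j ∧ c = d
  | .cp _ i c, j, d => i = j ∧ c = d
  | .del _ _, _, _ => False

/-- Active clauses of module `idx`: added to `idx` and not later deleted from `idx`. -/
def mactive (π : List MStep) (idx : ModIdx) : Set Clause :=
  {c | ∃ i, ∃ hi : i < π.length, (π[i]'hi).addsTo idx c ∧
      ∀ k, ∀ hk : k < π.length, i < k → (π[k]'hk) ≠ MStep.del idx c}

/-- All clauses asserted into module `idx`. -/
def allasserted (π : List MStep) (idx : ModIdx) : Set Clause :=
  {c | MStep.asserted idx c ∈ π}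

/-- Validity of a modular DRUP proof: every rup step is RUP w.r.t. the active
clauses of its module, every copy step's clause is RUP in its source module,
and the final step adds ⊥ to module `m` (by rup or by copy from `s`). -/
def validModular (π : List MStep) : Prop :=
  (∀ i, ∀ hi : i < π.length, ∀ idx c,
      (π[i]'hi) = MStep.rup idx c → RUP (mactive (π.take i) idx) c) ∧
  (∀ i, ∀ hi : i < π.length, ∀ src dst c,
      (π[i]'hi) = MStep.cp src dst c → RUP (mactive (π.take i) src) c) ∧
  ∃ hne : π ≠ [],
    π.getLast hne = MStep.rup ModIdx.m ∅ ∨ π.getLast hne = MStep.cp ModIdx.s ModIdx.m ∅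

/-- The proof contains no deletion steps. -/
def noDel (π : List MStep) : Prop := ∀ st ∈ π, ∀ idx c, st ≠ MStep.del idx c

/-- Backward clauses of a prefix: clauses copied from `m` to `s`. -/
def LB (π : List MStep) : Set Clause := {c | MStep.cp ModIdx.m ModIdx.s c ∈ π}
/-- Forward clauses of a prefix: clauses copied from `s` to `m`. -/
def LF (π : List MStep) : Set Clause := {c | MStep.cp ModIdx.s ModIdx.m c ∈ π}

/-!
Every clause added to either module is a semantic consequence of the clauses asserted into
both modules. By strong induction along the proof: an asserted clause is one of them, and a
`rup` or copy step derives its clause by sound unit propagation from active clauses of some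
module, each of which was added at an earlier step. Deletions only remove clauses, so they
never hurt. The last step adds the empty clause, which has no model.
-/

lemma satLit_neg {σ : Assignment} {l : Lit} : satLit σ l.neg ↔ ¬ satLit σ l := by
  obtain ⟨v, b⟩ := l
  cases b <;> simp [satLit, Lit.neg]

lemma UPC.satLit {Γ : Set Clause} {A : Set Lit} {σ : Assignment} (hΓ : satSet σ Γ)
    (hA : ∀ l ∈ A, satLit σ l) {l : Lit} (h : UPC Γ A l) : satLit σ l := by
  induction h with
  | assm hl => exact hA _ hl
  | @prop C l hC hlC _ ih =>
    obtain ⟨l', hl'C, hl'⟩ := hΓ C hC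
    by_cases hl'l : l' = l
    · exact hl'l ▸ hl'
    · exact absurd hl' (satLit_neg.mp (ih l' hl'C hl'l))

lemma upConflict.not_satLit {Γ : Set Clause} {A : Set Lit} {σ : Assignment}
    (h : upConflict Γ A) (hΓ : satSet σ Γ) : ¬ ∀ l ∈ A, satLit σ l := by
  intro hA
  obtain ⟨C, hC, hfalse⟩ := h
  obtain ⟨l, hlC, hl⟩ := hΓ C hC
  exact satLit_neg.mp ((hfalse l hlC).satLit hΓ hA) hl

lemma RUP.entails {Γ : Set Clause} {C : Clause} (h : RUP Γ C) : entails Γ C := by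
  intro σ hΓ
  by_contra hC
  refine h.not_satLit hΓ ?_
  rintro _ ⟨l, hlC, rfl⟩
  exact satLit_neg.mpr fun hl => hC ⟨l, hlC, hl⟩

lemma entails.of_forall_entails {Γ Δ : Set Clause} {C : Clause}
    (hΔ : ∀ D ∈ Δ, entails Γ D) (h : entails Δ C) : entails Γ C :=
  fun σ hσ => h σ fun D hD => hΔ D hD σ hσ

lemma not_entails_empty_of_satSet {Γ : Set Clause} {σ : Assignment} (hσ : satSet σ Γ) :
    ¬ entails Γ ∅ := fun h => by
  obtain ⟨l, hl, _⟩ := h σ hσ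
  exact Finset.notMem_empty l hl

lemma exists_addsTo_of_mem_mactive_take {π : List MStep} {i : ℕ} {idx : ModIdx} {c : Clause}
    (hc : c ∈ mactive (π.take i) idx) :
    ∃ k, ∃ hk : k < π.length, k < i ∧ (π[k]'hk).addsTo idx c := by
  obtain ⟨k, hk, hadd, -⟩ := hc
  rw [List.length_take, lt_min_iff] at hk
  exact ⟨k, hk.2, hk.1, by simpa using hadd⟩

lemma entails_of_addsTo {π : List MStep}
    (hrup : ∀ i, ∀ hi : i < π.length, ∀ idx c,
      (π[i]'hi) = MStep.rup idx c → RUP (mactive (π.take i) idx) c)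
    (hcp : ∀ i, ∀ hi : i < π.length, ∀ src dst c,
      (π[i]'hi) = MStep.cp src dst c → RUP (mactive (π.take i) src) c)
    (i : ℕ) (hi : i < π.length) (idx : ModIdx) (c : Clause) (hadd : (π[i]'hi).addsTo idx c) :
    entails (allasserted π .s ∪ allasserted π .m) c := by
  induction i using Nat.strong_induction_on generalizing idx c with
  | _ i ih =>
    have hactive : ∀ j, ∀ D ∈ mactive (π.take i) j,
        entails (allasserted π .s ∪ allasserted π .m) D := by
      intro j D hD
      obtain ⟨k, hk, hki, haddk⟩ := exists_addsTo_of_mem_mactive_take hD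
      exact ih k hki hk j D haddk
    generalize hstep : π[i]'hi = step at hadd
    cases step with
    | asserted j d =>
      obtain ⟨rfl, rfl⟩ := hadd
      have hmem : MStep.asserted j d ∈ π := hstep ▸ List.getElem_mem hi
      intro σ hσ
      cases j
      · exact hσ d (Or.inl hmem)
      · exact hσ d (Or.inr hmem)
    | rup j d =>
      obtain ⟨rfl, rfl⟩ := hadd
      exact .of_forall_entails (hactive j) (hrup i hi j d hstep).entails
    | cp src dst d =>
      obtain ⟨rfl, rfl⟩ := hadd
      exact .of_forall_entails (hactive src) (hcp i hi src dst d hstep).entails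
    | del => exact hadd.elim

lemma exists_addsTo_empty_of_validModular {π : List MStep} (h : validModular π) :
    ∃ i, ∃ hi : i < π.length, (π[i]'hi).addsTo .m ∅ := by
  obtain ⟨-, -, hne, hlast⟩ := h
  refine ⟨π.length - 1, by grind, ?_⟩
  rw [← List.getLast_eq_getElem hne]
  rcases hlast with hlast | hlast <;> simp [hlast, MStep.addsTo]

/-- a valid modular DRUP proof certifies that the conjunction of
clauses asserted into module `s` with those asserted into module `m` is unsat. -/
theorem modular_drup_sound (π : List MStep) (h : validModular π) :
    ¬ ∃ σ : Assignment, satSet σ (allasserted π ModIdx.s ∪ allasserted π ModIdx.m) := by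
  rintro ⟨σ, hσ⟩
  obtain ⟨i, hi, hadd⟩ := exists_addsTo_empty_of_validModular h
  exact not_entails_empty_of_satSet hσ (entails_of_addsTo h.1 h.2.1 i hi .m ∅ hadd)
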